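/- arXiv:2204.01469 — 2 statements merged into one kernel-verified Lean document; each statement's English description precedes it below -/
import Mathlib

section
/- Let p be a probability distribution on a finite set {x_1, ..., x_K} and let D consist of N i.i.d. samples from p (N ≥ 1), with p̂ the empirical distribution. Then the bias of the plug-in entropy estimator equals minus the expected KL divergence of the empirical distribution from the true one: E[Ĥ_mle(D)] − H(p) = −E[KL(p̂ ‖ p)], where KL(q ‖ p) = Σ_{k : q(x_k) > 0} q(x_k) log(q(x_k)/p(x_k)). (Almost surely every outcome observed in D has p(x_k) > 0, so KL(p̂ ‖ p) is almost surely finite.) -/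
open Finset Real

/-- Shannon entropy of a finite distribution (convention `0 * log 0 = 0`). -/
noncomputable def entropy {K : ℕ} (p : Fin K → ℝ) : ℝ := -∑ k, p k * Real.log (p k)

/-- The empirical (maximum-likelihood) distribution of a dataset of `N` samples. -/
noncomputable def empirical {N K : ℕ} (D : Fin N → Fin K) (k : Fin K) : ℝ :=
  ((Finset.univ.filter (fun n => D n = k)).card : ℝ) / N

/-- Expectation of a statistic over `N` i.i.d. samples from `p`. -/
noncomputable def expect {N K : ℕ} (p : Fin K → ℝ) (f : (Fin N → Fin K) → ℝ) : ℝ :=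
  ∑ D : Fin N → Fin K, (∏ n, p (D n)) * f D

/-- KL divergence `KL(q ‖ p) = Σ_{k : q k > 0} q k * log (q k / p k)`. -/
noncomputable def kl {K : ℕ} (q p : Fin K → ℝ) : ℝ :=
  ∑ k, if 0 < q k then q k * Real.log (q k / p k) else 0

/-- Expectation of the empirical frequency of `k` is `p k`. -/
lemma expect_empirical {K N : ℕ} (hN : 1 ≤ N) (p : Fin K → ℝ)
    (hsum : ∑ k, p k = 1) (k : Fin K) :
    ∑ D : Fin N → Fin K, (∏ n, p (D n)) * empirical D k = p k := by
  have hinner : ∀ n : Fin N,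
      (∑ D : Fin N → Fin K, (∏ m, p (D m)) * (if D n = k then (1:ℝ) else 0)) = p k := by
    intro n
    set g : Fin N → Fin K → ℝ := fun m j => if m = n then (if j = k then p j else 0) else p j
      with hg
    have h1 : ∀ D : Fin N → Fin K,
        (∏ m, p (D m)) * (if D n = k then (1:ℝ) else 0) = ∏ m, g m (D m) := by
      intro D
      by_cases hDn : D n = k
      · simp only [hDn, if_true, mul_one]
        refine Finset.prod_congr rfl fun m _ => ?_
        simp only [hg]
        by_cases hm : m = n
        · subst hm; simp [hDn]
        · simp [hm]
      · have hz : g n (D n) = 0 := by simp [hg, hDn]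
        rw [if_neg hDn, mul_zero]
        exact (Finset.prod_eq_zero (Finset.mem_univ n) hz).symm
    have h2 : (∑ D : Fin N → Fin K, ∏ m, g m (D m)) = ∏ m, ∑ j, g m j := by
      rw [Finset.prod_univ_sum]
      simp
    have h3 : ∀ m : Fin N, (∑ j, g m j) = if m = n then p k else 1 := by
      intro m
      by_cases hm : m = n
      · simp [hg, hm, Finset.sum_ite_eq' Finset.univ k p]
      · simp [hg, hm, hsum]
    calc (∑ D : Fin N → Fin K, (∏ m, p (D m)) * (if D n = k then (1:ℝ) else 0))
        = ∑ D : Fin N → Fin K, ∏ m, g m (D m) := Finset.sum_congr rfl fun D _ => h1 D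
      _ = ∏ m, ∑ j, g m j := h2
      _ = ∏ m, (if m = n then p k else 1) := Finset.prod_congr rfl fun m _ => h3 m
      _ = p k := by simp
  have hNpos : (0:ℝ) < N := by exact_mod_cast hN
  have hemp : ∀ D : Fin N → Fin K,
      empirical D k = (∑ n : Fin N, (if D n = k then (1:ℝ) else 0)) / N := by
    intro D
    rw [empirical, Finset.card_filter]
    push_cast
    rfl
  calc ∑ D : Fin N → Fin K, (∏ n, p (D n)) * empirical D k
      = ∑ D : Fin N → Fin K, ∑ n : Fin N,
          ((∏ m, p (D m)) * (if D n = k then (1:ℝ) else 0)) / N := by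
        refine Finset.sum_congr rfl fun D _ => ?_
        rw [hemp D, Finset.sum_div, Finset.mul_sum]
        refine Finset.sum_congr rfl fun n _ => ?_
        ring
    _ = ∑ n : Fin N, (∑ D : Fin N → Fin K,
          (∏ m, p (D m)) * (if D n = k then (1:ℝ) else 0)) / N := by
        rw [Finset.sum_comm]
        exact Finset.sum_congr rfl fun n _ => (Finset.sum_div _ _ _).symm
    _ = ∑ n : Fin N, p k / N := by
        exact Finset.sum_congr rfl fun n _ => by rw [hinner n]
    _ = p k := by
        rw [Finset.sum_const, Finset.card_univ, Fintype.card_fin, nsmul_eq_mul]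
        field_simp

/-- The bias of the plug-in entropy estimator equals minus the expected KL divergence
of the empirical distribution from the true one. -/
theorem plugin_bias_eq_neg_expected_kl {K N : ℕ} (hN : 1 ≤ N)
    (p : Fin K → ℝ) (hp : ∀ k, 0 ≤ p k) (hsum : ∑ k, p k = 1) :
    expect p (fun D : Fin N → Fin K => entropy (empirical D)) - entropy p =
      -expect p (fun D : Fin N → Fin K => kl (empirical D) p) := by
  have hNpos : (0:ℝ) < N := by exact_mod_cast hN
  have key : ∀ D : Fin N → Fin K,
      (∏ n, p (D n)) * (entropy (empirical D) + kl (empirical D) p)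
        = (∏ n, p (D n)) * (-∑ k, empirical D k * Real.log (p k)) := by
    intro D
    rcases eq_or_ne (∏ n, p (D n)) 0 with h | h
    · simp [h]
    · congr 1
      have hkpos : ∀ k, 0 < empirical D k → 0 < p k := by
        intro k hq
        have hcard : (Finset.univ.filter (fun n => D n = k)).Nonempty := by
          rw [Finset.nonempty_iff_ne_empty]
          intro hc
          rw [empirical, hc] at hq
          simp at hq
        obtain ⟨n, hn⟩ := hcard
        have hDn : D n = k := by simpa using hn
        have : p (D n) ≠ 0 := fun h0 => h (Finset.prod_eq_zero (Finset.mem_univ n) h0)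
        rw [hDn] at this
        exact lt_of_le_of_ne (hp k) (Ne.symm this)
      rw [entropy, kl, ← Finset.sum_neg_distrib, ← Finset.sum_add_distrib,
        ← Finset.sum_neg_distrib]
      refine Finset.sum_congr rfl fun k _ => ?_
      have hq0 : (0:ℝ) ≤ empirical D k := by
        rw [empirical]; positivity
      rcases lt_or_eq_of_le hq0 with hq | hq
      · rw [if_pos hq, Real.log_div (ne_of_gt hq) (ne_of_gt (hkpos k hq))]
        ring
      · rw [if_neg (by rw [← hq]; exact lt_irrefl 0)]
        rw [← hq]; ring
  have main : expect p (fun D : Fin N → Fin K => entropy (empirical D))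
      + expect p (fun D : Fin N → Fin K => kl (empirical D) p) = entropy p := by
    unfold _root_.expect
    rw [← Finset.sum_add_distrib]
    have : ∀ D : Fin N → Fin K,
        (∏ n, p (D n)) * entropy (empirical D) + (∏ n, p (D n)) * kl (empirical D) p
          = (∏ n, p (D n)) * (-∑ k, empirical D k * Real.log (p k)) := by
      intro D; rw [← mul_add]; exact key D
    rw [Finset.sum_congr rfl fun D _ => this D]
    have swap : (∑ D : Fin N → Fin K, (∏ n, p (D n)) * (∑ k, empirical D k * Real.log (p k)))
        = ∑ k, p k * Real.log (p k) := by
      calc (∑ D : Fin N → Fin K, (∏ n, p (D n)) * (∑ k, empirical D k * Real.log (p k)))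
          = ∑ D : Fin N → Fin K, ∑ k, ((∏ n, p (D n)) * empirical D k) * Real.log (p k) := by
            refine Finset.sum_congr rfl fun D _ => ?_
            rw [Finset.mul_sum]
            exact Finset.sum_congr rfl fun k _ => by ring
        _ = ∑ k, (∑ D : Fin N → Fin K, (∏ n, p (D n)) * empirical D k) * Real.log (p k) := by
            rw [Finset.sum_comm]
            exact Finset.sum_congr rfl fun k _ => (Finset.sum_mul _ _ _).symm
        _ = ∑ k, p k * Real.log (p k) := by
            exact Finset.sum_congr rfl fun k _ => by rw [expect_empirical hN p hsum k]
    simp only [mul_neg]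
    rw [Finset.sum_neg_distrib, swap, entropy]
  linarith [main]
end

section
/- Let K ≥ 2 be an integer. Then the NSB hyperprior density integrates to one: ∫_0^∞ ( K ψ₁(Kα + 1) − ψ₁(α + 1) ) dα = log K, where ψ₁ is the trigamma function (the second derivative of log Γ). Equivalently, p_nsb(α) = ( K ψ₁(Kα + 1) − ψ₁(α + 1) ) / log K is a probability density on (0, ∞). -/
open Real MeasureTheory

/-- The digamma function `ψ(t) = d/dt log Γ(t)`. -/
noncomputable def digamma (t : ℝ) : ℝ := deriv (fun s : ℝ => Real.log (Real.Gamma s)) t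

/-- The trigamma function `ψ₁ = ψ′`. -/
noncomputable def trigamma (t : ℝ) : ℝ := deriv digamma t

/-!
The Bohr–Mollerup convexity of `log Γ` squeezes `ψ (x + 1)` between `log x` and `log (x + 1)`.
Together with the recurrence `ψ (x + 1) = ψ x + 1 / x` this gives the series
`ψ x = ψ 1 + ∑ (1 / (n + 1) - 1 / (x + n))`, and differentiating termwise
`ψ₁ x = ∑ 1 / (x + n) ^ 2`. Comparing this series with telescoping ones yields
`1 / x ≤ ψ₁ x ≤ 1 / (x - 1 / 2)`, which for `K ≥ 2` makes the integrand nonnegative. Its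
antiderivative `ψ (K α + 1) - ψ (α + 1)` vanishes at `0` and tends to `log K`, so the improper
integral equals `log K`.
-/

open Filter Topology Set

lemma differentiableAt_log_Gamma {x : ℝ} (hx : 0 < x) :
    DifferentiableAt ℝ (fun s => log (Gamma s)) x := by
  have hx' : ∀ m : ℕ, x ≠ -m := fun m => (neg_nonpos.2 m.cast_nonneg).trans_lt hx |>.ne'
  exact (differentiableAt_Gamma hx').log (Gamma_ne_zero hx')

lemma log_Gamma_add_one {x : ℝ} (hx : 0 < x) :
    log (Gamma (x + 1)) = log (Gamma x) + log x := by
  rw [Gamma_add_one hx.ne', log_mul hx.ne' (Gamma_pos_of_pos hx).ne', add_comm]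

lemma digamma_add_one {x : ℝ} (hx : 0 < x) : digamma (x + 1) = digamma x + x⁻¹ := by
  have hshift : digamma (x + 1) = deriv (fun s => log (Gamma (s + 1))) x :=
    (deriv_comp_add_const (f := fun s => log (Gamma s)) 1 x).symm
  rw [hshift, ← deriv_log x, digamma,
    ← deriv_add (differentiableAt_log_Gamma hx) (differentiableAt_log hx.ne')]
  exact EventuallyEq.deriv_eq (eventually_gt_nhds hx |>.mono fun y hy => log_Gamma_add_one hy)

lemma digamma_add_nat {x : ℝ} (hx : 0 < x) (N : ℕ) :
    digamma (x + N) = digamma x + ∑ m ∈ Finset.range N, (x + m)⁻¹ := by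
  induction N with
  | zero => simp
  | succ N ih =>
    rw [Nat.cast_succ, ← add_assoc, digamma_add_one (by positivity), ih, Finset.sum_range_succ,
      add_assoc]

lemma digamma_le_log {x : ℝ} (hx : 0 < x) : digamma x ≤ log x := by
  have h := convexOn_log_Gamma.deriv_le_slope hx (by positivity : (0 : ℝ) < x + 1)
    (lt_add_one x) (differentiableAt_log_Gamma hx)
  rwa [slope_def_field, Function.comp_apply, Function.comp_apply, log_Gamma_add_one hx,
    add_sub_cancel_left, add_sub_cancel_left, div_one] at h

lemma log_le_digamma_add_one {x : ℝ} (hx : 0 < x) : log x ≤ digamma (x + 1) := by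
  have h := convexOn_log_Gamma.slope_le_deriv hx (by positivity : (0 : ℝ) < x + 1)
    (lt_add_one x) (differentiableAt_log_Gamma (by positivity))
  rwa [slope_def_field, Function.comp_apply, Function.comp_apply, log_Gamma_add_one hx,
    add_sub_cancel_left, add_sub_cancel_left, div_one] at h

lemma tendsto_digamma_add_sub_log (y : ℝ) :
    Tendsto (fun x => digamma (x + y) - log x) atTop (𝓝 0) := by
  refine tendsto_of_tendsto_of_tendsto_of_le_of_le' (tendsto_log_comp_add_sub_log (y - 1))
    (tendsto_log_comp_add_sub_log y) ?_ ?_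
  · filter_upwards [eventually_gt_atTop (1 - y)] with x hx
    have := log_le_digamma_add_one (by linarith : 0 < x + (y - 1))
    rw [show x + (y - 1) + 1 = x + y by ring] at this
    linarith
  · filter_upwards [eventually_gt_atTop (-y)] with x hx
    linarith [digamma_le_log (by linarith : 0 < x + y)]

lemma summable_inv_add_sq {a : ℝ} (ha : 0 < a) : Summable fun n : ℕ => ((a + n) ^ 2)⁻¹ := by
  refine ((summable_one_div_nat_add_rpow a 2).2 one_lt_two).congr fun n => ?_
  rw [abs_of_pos (by positivity), rpow_two, one_div, add_comm]

lemma hasDerivAt_inv_succ_sub_inv_add {y : ℝ} (n : ℕ) (hy : 0 < y + n) :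
    HasDerivAt (fun z : ℝ => ((n : ℝ) + 1)⁻¹ - (z + n)⁻¹) ((y + n) ^ 2)⁻¹ y := by
  have h := ((hasDerivAt_id y).add_const (n : ℝ)).fun_inv hy.ne'
  simpa [neg_div, one_div] using h.const_sub ((n : ℝ) + 1)⁻¹

lemma norm_inv_add_sq_le {a y : ℝ} (ha : 0 < a) (hy : a < y) (n : ℕ) :
    ‖((y + n) ^ 2)⁻¹‖ ≤ ((a + n) ^ 2)⁻¹ := by
  rw [norm_inv, norm_pow, Real.norm_of_nonneg (by positivity [ha.trans hy])]
  gcongr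

lemma exists_pos_lt_lt_one {x : ℝ} (hx : 0 < x) : ∃ a, 0 < a ∧ a < x ∧ a < 1 :=
  ⟨min x 1 / 2, by positivity, by linarith [min_le_left x 1], by linarith [min_le_right x 1]⟩

lemma summable_inv_succ_sub_inv_add {x : ℝ} (hx : 0 < x) :
    Summable fun n : ℕ => ((n : ℝ) + 1)⁻¹ - (x + n)⁻¹ := by
  obtain ⟨a, ha, hax, ha1⟩ := exists_pos_lt_lt_one hx
  -- every term vanishes at `1`; the uniform derivative bound on `Ioi a` carries summability to `x`
  exact summable_of_summable_hasDerivAt_of_isPreconnected (summable_inv_add_sq ha) isOpen_Ioi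
    isPreconnected_Ioi
    (fun n y (hy : a < y) => hasDerivAt_inv_succ_sub_inv_add n (by positivity [ha.trans hy]))
    (fun n y hy => norm_inv_add_sq_le ha hy n) (y₀ := 1) ha1 (by simp [add_comm]) hax

lemma hasDerivAt_tsum_inv_succ_sub_inv_add {x : ℝ} (hx : 0 < x) :
    HasDerivAt (fun y : ℝ => ∑' n : ℕ, (((n : ℝ) + 1)⁻¹ - (y + n)⁻¹))
      (∑' n : ℕ, ((x + n) ^ 2)⁻¹) x := by
  obtain ⟨a, ha, hax, ha1⟩ := exists_pos_lt_lt_one hx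
  exact hasDerivAt_tsum_of_isPreconnected (summable_inv_add_sq ha) isOpen_Ioi
    isPreconnected_Ioi
    (fun n y (hy : a < y) => hasDerivAt_inv_succ_sub_inv_add n (by positivity [ha.trans hy]))
    (fun n y hy => norm_inv_add_sq_le ha hy n) (y₀ := 1) ha1 (by simp [add_comm]) hax

lemma hasSum_digamma_sub_digamma_one {x : ℝ} (hx : 0 < x) :
    HasSum (fun n : ℕ => ((n : ℝ) + 1)⁻¹ - (x + n)⁻¹) (digamma x - digamma 1) := by
  have h := (summable_inv_succ_sub_inv_add hx).hasSum
  convert h using 1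
  refine tendsto_nhds_unique ?_ h.tendsto_sum_nat
  have hgap : Tendsto (fun N : ℕ => digamma (N + x) - digamma (N + 1)) atTop (𝓝 0) := by
    simpa [Function.comp_def] using
      ((tendsto_digamma_add_sub_log x).sub (tendsto_digamma_add_sub_log 1)).comp
        tendsto_natCast_atTop_atTop
  have hpartial (N : ℕ) : ∑ m ∈ Finset.range N, (((m : ℝ) + 1)⁻¹ - (x + m)⁻¹) =
      digamma x - digamma 1 - (digamma (N + x) - digamma (N + 1)) := by
    rw [add_comm (N : ℝ), add_comm (N : ℝ), digamma_add_nat hx, digamma_add_nat one_pos,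
      Finset.sum_sub_distrib]
    simp only [add_comm (1 : ℝ)]
    ring
  simpa [hpartial] using tendsto_const_nhds.sub hgap

lemma hasDerivAt_digamma_tsum {x : ℝ} (hx : 0 < x) :
    HasDerivAt digamma (∑' n : ℕ, ((x + n) ^ 2)⁻¹) x := by
  refine ((hasDerivAt_tsum_inv_succ_sub_inv_add hx).const_add (digamma 1)).congr_of_eventuallyEq ?_
  filter_upwards [eventually_gt_nhds hx] with y hy
  rw [(hasSum_digamma_sub_digamma_one hy).tsum_eq, add_sub_cancel]

lemma trigamma_eq_tsum {x : ℝ} (hx : 0 < x) : trigamma x = ∑' n : ℕ, ((x + n) ^ 2)⁻¹ :=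
  (hasDerivAt_digamma_tsum hx).deriv

lemma hasDerivAt_digamma {x : ℝ} (hx : 0 < x) : HasDerivAt digamma (trigamma x) x :=
  trigamma_eq_tsum hx ▸ hasDerivAt_digamma_tsum hx

lemma hasSum_inv_add_sub_inv_add_one {c : ℝ} (hc : 0 < c) :
    HasSum (fun n : ℕ => (c + n)⁻¹ - (c + n + 1)⁻¹) c⁻¹ := by
  have hterm (n : ℕ) : 0 ≤ (c + n)⁻¹ - (c + n + 1)⁻¹ :=
    sub_nonneg.2 (inv_anti₀ (by positivity) (by linarith))
  have hpartial (N : ℕ) :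
      ∑ n ∈ Finset.range N, ((c + n)⁻¹ - (c + n + 1)⁻¹) = c⁻¹ - (c + N)⁻¹ := by
    simpa [add_assoc] using Finset.sum_range_sub' (fun n : ℕ => (c + n)⁻¹) N
  have hlim : Tendsto (fun N : ℕ => (c + N)⁻¹) atTop (𝓝 0) :=
    (tendsto_atTop_add_const_left _ c tendsto_natCast_atTop_atTop).inv_tendsto_atTop
  rw [hasSum_iff_tendsto_nat_of_nonneg hterm]
  simpa [hpartial] using tendsto_const_nhds.sub hlim

lemma inv_sub_inv_add_one_le_inv_sq {y : ℝ} (hy : 0 < y) :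
    y⁻¹ - (y + 1)⁻¹ ≤ (y ^ 2)⁻¹ := by
  rw [inv_sub_inv hy.ne' (by positivity), add_sub_cancel_left, one_div]
  gcongr
  nlinarith

lemma inv_sq_le_inv_sub_half_sub_inv_add_half {y : ℝ} (hy : 1 / 2 < y) :
    (y ^ 2)⁻¹ ≤ (y - 1 / 2)⁻¹ - (y + 1 / 2)⁻¹ := by
  rw [inv_sub_inv (by linarith) (by linarith), show y + 1 / 2 - (y - 1 / 2) = 1 by ring, one_div]
  gcongr
  nlinarith

lemma inv_le_trigamma {x : ℝ} (hx : 0 < x) : x⁻¹ ≤ trigamma x := by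
  rw [trigamma_eq_tsum hx]
  exact hasSum_le (fun n => inv_sub_inv_add_one_le_inv_sq (by positivity))
    (hasSum_inv_add_sub_inv_add_one hx) (summable_inv_add_sq hx).hasSum

lemma trigamma_le_inv_sub_half {x : ℝ} (hx : 1 / 2 < x) : trigamma x ≤ (x - 1 / 2)⁻¹ := by
  rw [trigamma_eq_tsum (by linarith)]
  refine hasSum_le (fun n => ?_) (summable_inv_add_sq (by linarith)).hasSum
    (hasSum_inv_add_sub_inv_add_one (by linarith : 0 < x - 1 / 2))
  have hy : 1 / 2 < x + n := by linarith [n.cast_nonneg (α := ℝ)]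
  rw [show x - 1 / 2 + n = x + n - 1 / 2 by ring,
    show x + n - 1 / 2 + 1 = x + n + 1 / 2 by ring]
  exact inv_sq_le_inv_sub_half_sub_inv_add_half hy

lemma trigamma_add_one_le_mul_trigamma_mul_add_one {K α : ℝ} (hK : 2 ≤ K) (hα : 0 ≤ α) :
    trigamma (α + 1) ≤ K * trigamma (K * α + 1) :=
  calc trigamma (α + 1) ≤ (α + 1 / 2)⁻¹ := by
        have h := trigamma_le_inv_sub_half (x := α + 1) (by linarith)
        rwa [show α + 1 - 1 / 2 = α + 1 / 2 by ring] at h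
    _ ≤ K * (K * α + 1)⁻¹ := by
        rw [← div_eq_mul_inv, le_div_iff₀ (by positivity), inv_mul_eq_div,
          div_le_iff₀ (by positivity)]
        nlinarith
    _ ≤ K * trigamma (K * α + 1) := by
        gcongr
        exact inv_le_trigamma (by positivity)

lemma tendsto_digamma_mul_add_one_sub_digamma_add_one {K : ℝ} (hK : 0 < K) :
    Tendsto (fun α => digamma (K * α + 1) - digamma (α + 1)) atTop (𝓝 (log K)) := by
  have h := (((tendsto_digamma_add_sub_log 1).comp (tendsto_id.const_mul_atTop hK)).sub
    (tendsto_digamma_add_sub_log 1)).const_add (log K)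
  rw [sub_zero, add_zero] at h
  refine h.congr' ?_
  filter_upwards [eventually_gt_atTop 0] with α hα
  rw [Function.comp_apply, id, log_mul hK.ne' hα.ne']
  ring

lemma hasDerivAt_digamma_mul_add_one_sub_digamma_add_one {K α : ℝ} (hK : 0 ≤ K)
    (hα : 0 ≤ α) :
    HasDerivAt (fun α => digamma (K * α + 1) - digamma (α + 1))
      (K * trigamma (K * α + 1) - trigamma (α + 1)) α := by
  have h1 : HasDerivAt (fun y => digamma (K * y + 1)) (trigamma (K * α + 1) * K) α :=
    (hasDerivAt_digamma (by positivity)).comp α ((hasDerivAt_const_mul K).add_const 1)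
  have h2 : HasDerivAt (fun y => digamma (y + 1)) (trigamma (α + 1)) α :=
    (hasDerivAt_digamma (by positivity)).comp_add_const α 1
  exact (h1.sub h2).congr_deriv (by ring)

/-- The NSB hyperprior density integrates to one:
`∫_0^∞ (K ψ₁(Kα + 1) − ψ₁(α + 1)) dα = log K`, i.e.
`p_nsb(α) = (K ψ₁(Kα + 1) − ψ₁(α + 1)) / log K` is a probability density on `(0, ∞)`. -/
theorem nsb_density_normalizes (K : ℕ) (hK : 2 ≤ K) :
    (∫ α in Set.Ioi (0 : ℝ),
        ((K : ℝ) * trigamma ((K : ℝ) * α + 1) - trigamma (α + 1))) = Real.log K := by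
  have hK' : (2 : ℝ) ≤ K := by exact_mod_cast hK
  have h := integral_Ioi_of_hasDerivAt_of_nonneg'
    (fun α (hα : 0 ≤ α) => hasDerivAt_digamma_mul_add_one_sub_digamma_add_one (by positivity) hα)
    (fun α (hα : 0 < α) => sub_nonneg.2 (trigamma_add_one_le_mul_trigamma_mul_add_one hK' hα.le))
    (tendsto_digamma_mul_add_one_sub_digamma_add_one (by positivity))
  simpa using h
end
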